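/- arXiv:0912.2432 — 7 statements merged into one kernel-verified Lean document; each statement's English description precedes it below -/
import Mathlib

section
/- The class of small categories admitting a terminal object is a right asphericity structure (called the minimal right asphericity structure). Condition As1 holds trivially, and As2 holds: if u : A ⥤ B is a functor between small categories such that B has a terminal object and for every object b of B the comma category A/b (objects: pairs (a, f : u a ⟶ b)) has a terminal object, then A has a terminal object. -/
open CategoryTheory Limits

namespace Paper

/-- A right asphericity structure: a class of small categories satisfying (As1): every
small category having a terminal object belongs to the class, and (As2): if `u : A ⥤ B`
is a functor with `B` in the class and all comma categories `A/b` in the class, then `A`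
is in the class. -/
def IsRightAsphericityStructure (𝒜 : Set Cat.{0,0}) : Prop :=
  (∀ C : Cat.{0,0}, HasTerminal C → C ∈ 𝒜) ∧
  (∀ (A B : Cat.{0,0}) (u : A ⥤ B), B ∈ 𝒜 →
    (∀ b : B, Cat.of (CostructuredArrow u b) ∈ 𝒜) → A ∈ 𝒜)

end Paper

namespace CategoryTheory.CostructuredArrow

variable {A B : Type*} [Category A] [Category B] (u : A ⥤ B)

/-- Over a terminal object `X`, every `a : A` lies in `A/X` in exactly one way, so the arrows
`a ⟶ Y.left` in `A` are exactly the arrows `(a, !) ⟶ Y` in `A/X`. -/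
def isTerminalLeft {X : B} (hX : IsTerminal X) {Y : CostructuredArrow u X}
    (hY : IsTerminal Y) : IsTerminal Y.left :=
  IsTerminal.ofUniqueHom (fun a => (hY.from (mk (hX.from (u.obj a)))).left)
    (fun a m => congrArg CommaMorphism.left
      (hY.hom_ext (homMk (S := u) (f := mk (hX.from (u.obj a))) m (hX.hom_ext _ _)) _))

theorem hasTerminal_of_hasTerminal_costructuredArrow [HasTerminal B]
    [HasTerminal (CostructuredArrow u (⊤_ B))] : HasTerminal A :=
  (isTerminalLeft u terminalIsTerminal terminalIsTerminal).hasTerminal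

end CategoryTheory.CostructuredArrow

namespace Paper

/-- The class of small categories admitting a terminal object is a right asphericity
structure (the minimal right asphericity structure). -/
theorem minimal_isRightAsphericityStructure :
    IsRightAsphericityStructure {C : Cat.{0,0} | HasTerminal C} := by
  refine ⟨fun _ hC => hC, fun A B u (hB : HasTerminal B) hA => ?_⟩
  have : HasTerminal (CostructuredArrow u (⊤_ B)) := hA (⊤_ B)
  exact CostructuredArrow.hasTerminal_of_hasTerminal_costructuredArrow u

end Paper
end

section
/- If u : A ⥤ B and u' : A' ⥤ B' are aspheric functors between small categories, then the product functor u × u' : A × A' ⥤ B × B' is aspheric. In particular (taking B = B' to be the terminal category) the product of two aspheric small categories is aspheric. -/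
/-!
The comma categories `C/d` of a left adjoint `F : C ⥤ D` have terminal objects, so by (As1)
and (As2) the class `𝒜` is closed under left adjoints and in particular under equivalences.
For `C, D ∈ 𝒜`, apply (As2) to the projection `C × D ⥤ D`: its comma category over `d` maps to
`C` by a left adjoint, with right adjoint `c ↦ ((c, d), 𝟙 d)`. The statement for functors then
follows from `(A × A')/(b, b') ≌ A/b × A'/b'`.
-/

open CategoryTheory Limits

namespace Paper

/-- A functor between small categories is aspheric (w.r.t. a class 𝒜 of small
categories) if all its comma categories `A/b` belong to 𝒜. -/
def Aspheric (𝒜 : Set Cat.{0,0}) {A B : Cat.{0,0}} (u : A ⥤ B) : Prop :=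
  ∀ b : B, Cat.of (CostructuredArrow u b) ∈ 𝒜

theorem isLeftAdjoint_proj_snd_comp_fst (C D : Type*) [Category C] [Category D] (d : D) :
    (CostructuredArrow.proj (CategoryTheory.Prod.snd C D) d ⋙
      CategoryTheory.Prod.fst C D).IsLeftAdjoint := by
  let G (c : C) : CostructuredArrow (CategoryTheory.Prod.snd C D) d :=
    CostructuredArrow.mk (Y := (c, d)) (𝟙 d)
  refine ⟨_, ⟨Adjunction.adjunctionOfEquivRight (G_obj := G) (fun X c => ?_) ?_⟩⟩
  · exact
      { toFun g := CostructuredArrow.homMk (g, X.hom) (Category.comp_id _)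
        invFun φ := φ.left.1
        left_inv _ := rfl
        right_inv φ := by
          ext
          · rfl
          · simpa [G] using (CostructuredArrow.w φ).symm }
  · intro X' X c f g
    ext
    · rfl
    · exact (CostructuredArrow.w f).symm

section

variable {𝒜 : Set Cat.{0,0}}

theorem mem_of_isLeftAdjoint (h𝒜 : IsRightAsphericityStructure 𝒜) {C D : Cat.{0,0}}
    (F : C ⥤ D) (hF : F.IsLeftAdjoint) (hD : D ∈ 𝒜) : C ∈ 𝒜 :=
  h𝒜.2 C D F hD fun d =>
    h𝒜.1 _ ((isLeftAdjoint_iff_hasTerminal_costructuredArrow (F := F)).mp hF d)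

theorem mem_of_equivalence (h𝒜 : IsRightAsphericityStructure 𝒜) {C D : Cat.{0,0}}
    (e : C ≌ D) (hD : D ∈ 𝒜) : C ∈ 𝒜 :=
  mem_of_isLeftAdjoint h𝒜 e.functor e.isLeftAdjoint_functor hD

theorem prod_mem (h𝒜 : IsRightAsphericityStructure 𝒜) {C D : Type} [Category.{0} C]
    [Category.{0} D] (hC : Cat.of C ∈ 𝒜) (hD : Cat.of D ∈ 𝒜) : Cat.of (C × D) ∈ 𝒜 :=
  h𝒜.2 (Cat.of (C × D)) (Cat.of D) (CategoryTheory.Prod.snd C D) hD fun (d : D) =>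
    mem_of_isLeftAdjoint h𝒜 (D := Cat.of C)
      (CostructuredArrow.proj (CategoryTheory.Prod.snd C D) d ⋙ CategoryTheory.Prod.fst C D)
      (isLeftAdjoint_proj_snd_comp_fst C D d) hC

theorem Aspheric.prod (h𝒜 : IsRightAsphericityStructure 𝒜) {A B A' B' : Cat.{0,0}}
    {u : A ⥤ B} {u' : A' ⥤ B'} (hu : Aspheric 𝒜 u) (hu' : Aspheric 𝒜 u') :
    Aspheric 𝒜 (A := Cat.of (A × A')) (B := Cat.of (B × B')) (u.prod u') :=
  fun ((b, b') : B × B') =>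
    mem_of_equivalence h𝒜 (D := Cat.of (CostructuredArrow u b × CostructuredArrow u' b'))
      (CostructuredArrow.prodEquivalence u u' b b')
      (prod_mem h𝒜 (hu b) (hu' b'))

end

/-- The product of two aspheric functors is aspheric; in particular, the product of two
aspheric small categories is aspheric. -/
theorem prod_aspheric (𝒜 : Set Cat.{0,0}) (h𝒜 : IsRightAsphericityStructure 𝒜) :
    (∀ (A B A' B' : Cat.{0,0}) (u : A ⥤ B) (u' : A' ⥤ B'),
      Aspheric 𝒜 u → Aspheric 𝒜 u' →
      Aspheric 𝒜 (A := Cat.of (A × A')) (B := Cat.of (B × B')) (u.prod u')) ∧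
    (∀ C C' : Cat.{0,0}, C ∈ 𝒜 → C' ∈ 𝒜 → Cat.of (C × C') ∈ 𝒜) :=
  ⟨fun _ _ _ _ _ _ => Aspheric.prod h𝒜, fun _ _ => prod_mem h𝒜⟩

end Paper
end

section
/- Let u : A ⥤ B and v : B ⥤ C be functors between small categories, and consider A over C via the composite u ⋙ v. Then u is aspheric if and only if for every object c of C the induced functor u/c : A/c ⥤ B/c between comma categories (A/c formed with respect to u ⋙ v, B/c with respect to v, with u/c sending (a, p : v(u a) ⟶ c) to (u a, p)) is aspheric. -/
open CategoryTheory Limits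

namespace Paper

/-
Slicing twice is slicing once: `(A/c)/(b, p) ≃ A/b` for every object `(b, p)` of `B/c`. As
equivalences are left adjoints, hence aspheric, an asphericity structure is invariant under
equivalence, so both sides of the claim are about the same categories `A/b`; for the converse
direction one takes `c := v b` and `p := 𝟙`.
-/

namespace IsRightAsphericityStructure

variable {𝒜 : Set Cat.{0,0}}

theorem aspheric_of_isLeftAdjoint (h𝒜 : IsRightAsphericityStructure 𝒜) {A B : Cat.{0,0}}
    (u : A ⥤ B) [u.IsLeftAdjoint] : Aspheric 𝒜 u :=
  fun b => h𝒜.1 _ (isLeftAdjoint_iff_hasTerminal_costructuredArrow.1 inferInstance b)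

theorem mem_of_equivalence (h𝒜 : IsRightAsphericityStructure 𝒜) {X Y : Cat.{0,0}}
    (e : X ≌ Y) (hY : Y ∈ 𝒜) : X ∈ 𝒜 :=
  h𝒜.2 X Y e.functor hY (h𝒜.aspheric_of_isLeftAdjoint e.functor)

theorem mem_iff_of_equivalence (h𝒜 : IsRightAsphericityStructure 𝒜) {X Y : Cat.{0,0}}
    (e : X ≌ Y) : X ∈ 𝒜 ↔ Y ∈ 𝒜 :=
  ⟨h𝒜.mem_of_equivalence e.symm, h𝒜.mem_of_equivalence e⟩

theorem costructuredArrow_pre_mem_iff (h𝒜 : IsRightAsphericityStructure 𝒜)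
    {A B C : Cat.{0,0}} (u : A ⥤ B) (v : B ⥤ C) {c : C} (f : CostructuredArrow v c) :
    Cat.of (CostructuredArrow (CostructuredArrow.pre u v c) f) ∈ 𝒜 ↔
      Cat.of (CostructuredArrow u f.left) ∈ 𝒜 :=
  h𝒜.mem_iff_of_equivalence (X := Cat.of _) (Y := Cat.of _)
    (CostructuredArrow.preEquivalence u f)

end IsRightAsphericityStructure

/-- Over a triangle `v ∘ u : A ⥤ B ⥤ C`, the functor `u` is aspheric if and only if
all the induced functors `u/c : A/c ⥤ B/c` are aspheric. -/
theorem aspheric_iff_comma_aspheric (𝒜 : Set Cat.{0,0})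
    (h𝒜 : IsRightAsphericityStructure 𝒜) {A B C : Cat.{0,0}} (u : A ⥤ B) (v : B ⥤ C) :
    Aspheric 𝒜 u ↔
      ∀ c : C, Aspheric 𝒜
        (A := Cat.of (CostructuredArrow (u ⋙ v) c)) (B := Cat.of (CostructuredArrow v c))
        (CostructuredArrow.pre u v c) := by
  constructor
  · intro hu c f
    exact (h𝒜.costructuredArrow_pre_mem_iff u v f).2 (hu f.left)
  · intro hpre b
    exact (h𝒜.costructuredArrow_pre_mem_iff u v (CostructuredArrow.mk (𝟙 (v.obj b)))).1
      (hpre (v.obj b) _)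

end Paper
end

section
/- If u : A ⥤ B and v : B ⥤ C are aspheric functors between small categories, then the composite v ∘ u : A ⥤ C is aspheric. -/
open CategoryTheory Limits

namespace Paper

/-! Fix `c : C` and apply (As2) to the functor `A/c ⥤ B/c` induced by `u`: the base `B/c` is
aspheric because `v` is, and the comma category over `(b, g : v b ⟶ c)` is equivalent to `A/b`,
which is aspheric because `u` is. Classes closed under (As1) and (As2) are invariant under
equivalence, since an equivalence is a left adjoint and so has comma categories with terminal
objects. -/

namespace IsRightAsphericityStructure

variable {𝒜 : Set Cat.{0,0}}

theorem mem_of_aspheric (h𝒜 : IsRightAsphericityStructure 𝒜) {A B : Cat.{0,0}} {u : A ⥤ B}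
    (hB : B ∈ 𝒜) (hu : Aspheric 𝒜 u) : A ∈ 𝒜 :=
  h𝒜.2 A B u hB hu

theorem mem_of_equivalence_s3 (h𝒜 : IsRightAsphericityStructure 𝒜) {A B : Cat.{0,0}} (e : A ≌ B)
    (hB : B ∈ 𝒜) : A ∈ 𝒜 :=
  have := e.isLeftAdjoint_functor
  h𝒜.mem_of_aspheric hB (h𝒜.aspheric_of_isLeftAdjoint e.functor)

end IsRightAsphericityStructure

/-- The composition of two aspheric functors is aspheric. -/
theorem aspheric_comp (𝒜 : Set Cat.{0,0}) (h𝒜 : IsRightAsphericityStructure 𝒜)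
    {A B C : Cat.{0,0}} (u : A ⥤ B) (v : B ⥤ C)
    (hu : Aspheric 𝒜 u) (hv : Aspheric 𝒜 v) : Aspheric 𝒜 (u ⋙ v) := by
  intro c
  refine h𝒜.mem_of_aspheric (u := CostructuredArrow.pre u v c) (hv c) fun X => ?_
  exact h𝒜.mem_of_equivalence_s3 (B := Cat.of (CostructuredArrow u X.left))
    (CostructuredArrow.preEquivalence u X) (hu X.left)

end Paper
end

section
/- A functor u : A ⥤ B between small categories is a precofibration if and only if for every object b of B the canonical functor A_b ⥤ A/b, sending an object a of the fiber A_b to the object (a, 1_b) of the comma category A/b, has a left adjoint. -/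
open CategoryTheory Limits

namespace Paper

/-- The fiber of `u : A ⥤ B` over `b`: objects are the `a` with `u a = b`, morphisms
are the `f` with `u f = 1_b` (expressed via `eqToHom`). -/
def Fiber {A B : Cat.{0,0}} (u : A ⥤ B) (b : B) : Type := {a : A // u.obj a = b}

instance {A B : Cat.{0,0}} (u : A ⥤ B) (b : B) : Category (Fiber u b) where
  Hom a a' := {f : a.1 ⟶ a'.1 // u.map f = eqToHom (a.2.trans a'.2.symm)}
  id a := ⟨𝟙 a.1, by simp⟩
  comp f g := ⟨f.1 ≫ g.1, by simp [f.2, g.2]⟩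
  id_comp f := Subtype.ext (Category.id_comp f.1)
  comp_id f := Subtype.ext (Category.comp_id f.1)
  assoc f g h := Subtype.ext (Category.assoc f.1 g.1 h.1)

/-- The canonical functor `A_b ⥤ A/b`, sending `a` to `(a, 1_b)`. -/
def fiberToComma {A B : Cat.{0,0}} (u : A ⥤ B) (b : B) :
    Fiber u b ⥤ CostructuredArrow u b where
  obj a := CostructuredArrow.mk (eqToHom a.2)
  map {a a'} f := CostructuredArrow.homMk f.1 (by simp [f.2])

/-- An arrow `c : a ⟶ a'` is cocartesian with respect to `u` if every `f : a ⟶ a''`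
with `u f = u c` factors uniquely through `c` via a morphism over an identity. -/
def IsCocartesian {A B : Cat.{0,0}} (u : A ⥤ B) {a a' : A} (c : a ⟶ a') : Prop :=
  ∀ (a'' : A) (f : a ⟶ a'') (h : u.obj a'' = u.obj a'),
    u.map f ≫ eqToHom h = u.map c →
    ∃! g : a' ⟶ a'', u.map g = eqToHom h.symm ∧ f = c ≫ g

/-- `u` is a precofibration if every arrow of `B` admits a cocartesian lift with any
prescribed source. -/
def IsPrecofibration {A B : Cat.{0,0}} (u : A ⥤ B) : Prop :=
  ∀ ⦃b b' : B⦄ (p : b ⟶ b') (a : A) (ha : u.obj a = b),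
    ∃ (a' : A) (c : a ⟶ a') (ha' : u.obj a' = b'),
      u.map c = eqToHom ha ≫ p ≫ eqToHom ha'.symm ∧ IsCocartesian u c

/-!
An object of `A/b` is an arrow `p : u a ⟶ b`. An object of the comma category under it,
`p ↓ (A_b ⥤ A/b)`, is an arrow `c : a ⟶ a'` with `a'` over `b` lifting `p`, and a morphism
to another such lift `f` is an arrow of the fiber `g` with `f = c ≫ g`. Hence such an object
is initial exactly when `c` is cocartesian, and the canonical functor has a left adjoint iff
every comma category under it has an initial object.
-/

section

variable {A B : Cat.{0,0}} {u : A ⥤ B} {b : B} {X : CostructuredArrow u b}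

lemma map_hom_left_comp_eqToHom (Y : StructuredArrow X (fiberToComma u b)) :
    u.map Y.hom.left ≫ eqToHom Y.right.2 = X.hom := by
  simpa [fiberToComma] using CostructuredArrow.w Y.hom

lemma map_hom_left_comp_eqToHom_eq_map_hom_left (Y Y' : StructuredArrow X (fiberToComma u b)) :
    u.map Y'.hom.left ≫ eqToHom (Y'.right.2.trans Y.right.2.symm) = u.map Y.hom.left := by
  have h := map_hom_left_comp_eqToHom Y'
  rw [← map_hom_left_comp_eqToHom Y] at h
  simpa [fiberToComma] using h =≫ eqToHom Y.right.2.symm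

lemma hom_left_comp_right_val {Y Y' : StructuredArrow X (fiberToComma u b)} (m : Y ⟶ Y') :
    Y.hom.left ≫ m.right.1 = Y'.hom.left := by
  rw [← StructuredArrow.w m]
  rfl

variable (X) in
def structuredArrowMk {a : A} (f : X.left ⟶ a) (ha : u.obj a = b)
    (hf : u.map f ≫ eqToHom ha = X.hom) : StructuredArrow X (fiberToComma u b) :=
  StructuredArrow.mk (Y := show Fiber u b from ⟨a, ha⟩)
    (CostructuredArrow.homMk f (by simpa [fiberToComma] using hf))

def structuredArrowHomMk {Y Y' : StructuredArrow X (fiberToComma u b)}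
    (g : Y.right.1 ⟶ Y'.right.1) (hg : u.map g = eqToHom (Y.right.2.trans Y'.right.2.symm))
    (w : Y.hom.left ≫ g = Y'.hom.left) : Y ⟶ Y' :=
  StructuredArrow.homMk ⟨g, hg⟩ (CostructuredArrow.hom_ext _ _ w)

lemma isCocartesian_of_isInitial {Y : StructuredArrow X (fiberToComma u b)} (hY : IsInitial Y) :
    IsCocartesian u Y.hom.left := by
  intro a'' f h hf
  let Y' := structuredArrowMk X f (h.trans Y.right.2) (by
    rw [← eqToHom_trans h Y.right.2, ← Category.assoc, hf, map_hom_left_comp_eqToHom])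
  let m := hY.to Y'
  refine ⟨m.right.1, ⟨m.right.2, (hom_left_comp_right_val m).symm⟩, ?_⟩
  rintro g ⟨hg, rfl⟩
  exact congrArg (·.right.1) (hY.hom_ext (structuredArrowHomMk (Y' := Y') g hg rfl) m)

noncomputable def isInitialOfIsCocartesian {Y : StructuredArrow X (fiberToComma u b)}
    (hY : IsCocartesian u Y.hom.left) : IsInitial Y :=
  have factor (Y' : StructuredArrow X (fiberToComma u b)) := hY Y'.right.1 Y'.hom.left
    (Y'.right.2.trans Y.right.2.symm) (map_hom_left_comp_eqToHom_eq_map_hom_left Y Y')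
  IsInitial.ofUniqueHom
    (fun Y' => structuredArrowHomMk (factor Y').choose (factor Y').choose_spec.1.1
      (factor Y').choose_spec.1.2.symm)
    (fun Y' m => StructuredArrow.hom_ext _ _ <| Subtype.ext <| (factor Y').unique
      ⟨m.right.2, (hom_left_comp_right_val m).symm⟩ (factor Y').choose_spec.1)

end

/-- A functor is a precofibration if and only if for every object `b` of `B` the
canonical functor `A_b ⥤ A/b` has a left adjoint. -/
theorem isPrecofibration_iff {A B : Cat.{0,0}} (u : A ⥤ B) :
    IsPrecofibration u ↔ ∀ b : B, (fiberToComma u b).IsRightAdjoint := by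
  simp only [isRightAdjoint_iff_hasInitial_structuredArrow]
  constructor
  · intro hu b X
    obtain ⟨a', c, ha', hc, hcoc⟩ := hu X.hom X.left rfl
    have hc' : u.map c ≫ eqToHom ha' = X.hom := by simp [hc]
    exact (isInitialOfIsCocartesian (Y := structuredArrowMk X c ha' hc') hcoc).hasInitial
  · intro h b b' p a ha
    let X := CostructuredArrow.mk (Y := a) (eqToHom ha ≫ p)
    have : HasInitial (StructuredArrow X (fiberToComma u b')) := h b' X
    let I := ⊥_ (StructuredArrow X (fiberToComma u b'))
    refine ⟨I.right.1, I.hom.left, I.right.2, ?_, isCocartesian_of_isInitial initialIsInitial⟩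
    rw [← Category.assoc, ← comp_eqToHom_iff]
    exact map_hom_left_comp_eqToHom I

end Paper
end

section
/- Let w : J ⥤ I be a functor between small categories. The functor L : Cat/J ⥤ (I ⥤ Cat), sending an object (A, v : A ⥤ J) of the over category Cat/J to the functor i ↦ (w ∘ v)/i (the comma category whose objects are pairs (a, p : w(v a) ⟶ i)), is left adjoint to the functor R : (I ⥤ Cat) ⥤ Cat/J sending F : I ⥤ Cat to the Grothendieck construction ∫(w ⋙ F) equipped with its canonical projection to J. -/
open CategoryTheory Limits

namespace Paper

/-- Repackage a functor between small categories as a morphism in `Cat`. -/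
abbrev catHom {C D : Type} [Category.{0} C] [Category.{0} D] (F : C ⥤ D) :
    Cat.of C ⟶ Cat.of D := F.toCatHom

/-- The functor `A/i ⥤ A'/i` induced by a triangle `h ≫ v' = v` over `I`. -/
def preComma {A A' I : Cat.{0,0}} (h : A ⟶ A') (v : A ⟶ I) (v' : A' ⟶ I)
    (hc : h ≫ v' = v) (i : I) : CostructuredArrow v.toFunctor i ⥤ CostructuredArrow v'.toFunctor i where
  obj f := CostructuredArrow.mk (Y := h.toFunctor.obj f.left)
    (eqToHom (Functor.congr_obj (congrArg Cat.Hom.toFunctor hc) f.left) ≫ f.hom)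
  map {f f'} φ := CostructuredArrow.homMk (h.toFunctor.map φ.left) (by
    have hh := Functor.congr_hom (congrArg Cat.Hom.toFunctor hc) φ.left
    dsimp at hh ⊢
    rw [hh]
    simp only [Category.assoc, eqToHom_trans_assoc, eqToHom_refl, Category.id_comp]
    rw [CostructuredArrow.w φ])
  map_id f := by apply CostructuredArrow.ext; simp
  map_comp φ ψ := by apply CostructuredArrow.ext; simp

/-- `Θ_I` : the functor `Cat/I ⥤ (I ⥤ Cat)` sending `(A, v : A ⥤ I)` to the functor
`i ↦ A/i` (comma categories). -/
def overToFunctor (I : Cat.{0,0}) : Over I ⥤ (↥I ⥤ Cat.{0,0}) where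
  obj X := CostructuredArrow.functor X.hom.toFunctor
  map {X Y} φ :=
    { app := fun i => catHom (preComma φ.left X.hom Y.hom (Over.w φ) i)
      naturality := fun i i' k => by
        apply Cat.Hom.ext
        show CostructuredArrow.map k ⋙ preComma φ.left X.hom Y.hom (Over.w φ) i'
          = preComma φ.left X.hom Y.hom (Over.w φ) i ⋙ CostructuredArrow.map k
        exact CategoryTheory.Functor.ext
          (fun f => by simp [preComma, CostructuredArrow.map, Comma.mapRight]; try rfl)
          (fun f g ψ => by
            apply CostructuredArrow.ext
            simp [preComma, CostructuredArrow.map, Comma.mapRight,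
              CostructuredArrow.eqToHom_left]
            erw [Comma.eqToHom_left, Comma.eqToHom_left]
            simp) }
  map_id X := by
    apply NatTrans.ext
    funext i
    apply Cat.Hom.ext
    show preComma (𝟙 X.left) X.hom X.hom (by simp) i = 𝟭 (CostructuredArrow X.hom.toFunctor i)
    exact CategoryTheory.Functor.ext
      (fun f => by simp [preComma]; try rfl)
      (fun f g ψ => by
        apply CostructuredArrow.ext
        simp [preComma, CostructuredArrow.eqToHom_left]
        erw [Comma.eqToHom_left, Comma.eqToHom_left]
        simp
        rfl)
  map_comp {X Y Z} φ ψ := by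
    apply NatTrans.ext
    funext i
    apply Cat.Hom.ext
    show preComma (φ.left ≫ ψ.left) X.hom Z.hom (by rw [Category.assoc, Over.w ψ, Over.w φ]) i
      = preComma φ.left X.hom Y.hom (Over.w φ) i ⋙ preComma ψ.left Y.hom Z.hom (Over.w ψ) i
    exact CategoryTheory.Functor.ext
      (fun f => by simp [preComma]; try rfl)
      (fun f g χ => by
        apply CostructuredArrow.ext
        simp [preComma, CostructuredArrow.eqToHom_left]
        erw [Comma.eqToHom_left, Comma.eqToHom_left]
        simp)

/-!
A functor `A ⥤ ∫(w ⋙ F)` over `J` is a lift of `v` to the fibres of `w ⋙ F`, and by a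
Yoneda-type argument a natural transformation out of `i ↦ (w ∘ v)/i` is determined by its values
at the objects `(a, 𝟙 : w (v a) ⟶ w (v a))`. Accordingly, the unit sends `a` to
`(v a, (a, 𝟙))`, and the counit at `i` sends `((j, x), p : w j ⟶ i)` to `F(p)(x)`.
Both triangle identities hold on the nose, since going around either triangle only inserts
identity arrows; as `Cat` is a strict category here, the work lies in transporting along the
equalities `F(g ≫ h) = F g ⋙ F h` of functors.
-/

section MapComp

/- The lemmas below take the relevant factorisations and `eqToHom` chains as hypotheses, to be
substituted in their proofs: they must match the unnormalised shapes that `simp` leaves in the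
fibres, where it cannot rewrite the arrows of `C` because the objects depend on them. -/

variable {C : Type*} [Category* C] (F : C ⥤ Cat)

abbrev mapCompHom {a b c : C} (g : a ⟶ b) (h : b ⟶ c) (k : a ⟶ c) (e : g ≫ h = k)
    (x : F.obj a) :
    (F.map k).toFunctor.obj x ⟶ (F.map h).toFunctor.obj ((F.map g).toFunctor.obj x) :=
  eqToHom (by subst e; rw [Functor.map_comp]; rfl)

theorem mapCompHom_id {a c : C} (g : a ⟶ a) (hg : g = 𝟙 a) (h : a ⟶ c)
    (e : g ≫ h = h) (x : F.obj a) (p : (F.map g).toFunctor.obj x = x) :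
    mapCompHom F g h h e x ≫ (F.map h).toFunctor.map (eqToHom p) = 𝟙 _ := by
  subst hg
  simp [eqToHom_map]

theorem mapCompHom_comp {a b c d : C} (g₁ : a ⟶ b) (g₂ : b ⟶ c) (g : a ⟶ c)
    (hg : g = g₁ ≫ g₂) (h : c ⟶ d) (h' : b ⟶ d) (k : a ⟶ d) (e : g ≫ h = k) (e₁ : g₁ ≫ h' = k)
    (e₂ : g₂ ≫ h = h') (x : F.obj a) (y : F.obj b) (z : F.obj c)
    (α : (F.map g₁).toFunctor.obj x ⟶ y) (β : (F.map g₂).toFunctor.obj y ⟶ z)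
    (p : (F.map g).toFunctor.obj x = (F.map g₂).toFunctor.obj ((F.map g₁).toFunctor.obj x)) :
    mapCompHom F g h k e x ≫ (F.map h).toFunctor.map (eqToHom p ≫ (F.map g₂).toFunctor.map α ≫ β)
      = (mapCompHom F g₁ h' k e₁ x ≫ (F.map h').toFunctor.map α) ≫
        (mapCompHom F g₂ h h' e₂ y ≫ (F.map h).toFunctor.map β) := by
  subst hg e₂ e
  have hα := Functor.congr_hom (congrArg Cat.Hom.toFunctor (F.map_comp g₂ h)) α
  dsimp at hα
  simp [eqToHom_map, hα]

theorem mapCompHom_naturality {a b c d : C} (g : a ⟶ b) (h : b ⟶ c) (k : a ⟶ c)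
    (e : g ≫ h = k) (l : c ⟶ d) (e' : g ≫ h ≫ l = k ≫ l) (x : F.obj a) (y : F.obj b)
    (α : (F.map g).toFunctor.obj x ⟶ y)
    (p : (F.map (k ≫ l)).toFunctor.obj x = (F.map l).toFunctor.obj ((F.map k).toFunctor.obj x))
    (q : (F.map l).toFunctor.obj ((F.map h).toFunctor.obj y) = (F.map (h ≫ l)).toFunctor.obj y) :
    mapCompHom F g (h ≫ l) (k ≫ l) e' x ≫ (F.map (h ≫ l)).toFunctor.map α
      = eqToHom p ≫ (F.map l).toFunctor.map (mapCompHom F g h k e x ≫ (F.map h).toFunctor.map α) ≫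
        eqToHom q := by
  subst e
  have hα := Functor.congr_hom (congrArg Cat.Hom.toFunctor (F.map_comp h l)) α
  dsimp at hα
  simp [eqToHom_map, hα]

theorem eqToHom_comp_map_of_eq_id {b : C} (u : b ⟶ b) (hu : u = 𝟙 b) {x y : F.obj b} (m : x ⟶ y)
    {X₁ X₂ X₃ X₄ : F.obj b} (a : X₁ = X₂) (a' : X₂ = (F.map (𝟙 b)).toFunctor.obj x) (c : X₁ = X₃)
    (d : X₃ = X₄) (e : X₄ = (F.map u).toFunctor.obj x)
    (g : (F.map u).toFunctor.obj y = (F.map (𝟙 b)).toFunctor.obj y) :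
    eqToHom a ≫ eqToHom a' ≫ (F.map (𝟙 b)).toFunctor.map m
      = eqToHom c ≫ eqToHom d ≫ eqToHom e ≫ (F.map u).toFunctor.map m ≫ eqToHom g := by
  subst hu
  simp

theorem eqToHom_comp_map_comp_of_eq {D : Type*} [Category* D] (G₁ G₂ : C ⥤ D)
    (hG : G₁ = G₂) {x₀ x y : C} (q : x₀ = x) (n : x₀ ⟶ x) (hn : n = eqToHom q) (m : x ⟶ y)
    {X₁ X₂ Y : D} (a : X₁ = G₁.obj x₀) (b : X₁ = X₂) (c : X₂ = G₂.obj x) (d : G₂.obj y = Y)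
    (e : Y = G₁.obj y) :
    eqToHom a ≫ G₁.map (n ≫ m) = eqToHom b ≫ eqToHom c ≫ G₂.map m ≫ eqToHom d ≫ eqToHom e := by
  subst hG hn q
  simp

end MapComp

variable {J I : Cat.{0,0}} (w : J ⟶ I)

/- Reducible copies of `CostructuredArrow.functor`, `w ⋙ -`, `Grothendieck.forget`,
`Grothendieck.map`, `whiskerLeft` and (for functors rather than morphisms of `Cat`) `preComma`.
Through them the fibres unfold reducibly to comma categories and fibres of `F`, so that `simp`
can use the lemmas about those; they agree definitionally with the versions in the statement. -/

abbrev commaFunctor {A : Type} [Category.{0} A] (S : A ⥤ I) : I ⥤ Cat.{0,0} where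
  obj i := ⟨CostructuredArrow S i, inferInstance⟩
  map k := ⟨CostructuredArrow.map k⟩
  map_id i := (CostructuredArrow.functor S).map_id i
  map_comp f g := (CostructuredArrow.functor S).map_comp f g

abbrev restrict (F : I ⥤ Cat.{0,0}) : J ⥤ Cat.{0,0} where
  obj j := F.obj (w.toFunctor.obj j)
  map f := F.map (w.toFunctor.map f)
  map_id j := (w.toFunctor ⋙ F).map_id j
  map_comp f g := (w.toFunctor ⋙ F).map_comp f g

abbrev restrictMap {F F' : I ⥤ Cat.{0,0}} (ν : F ⟶ F') : restrict w F ⟶ restrict w F' where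
  app j := ν.app (w.toFunctor.obj j)
  naturality _ _ k := ν.naturality (w.toFunctor.map k)

abbrev grothendieckForget (F : I ⥤ Cat.{0,0}) : Grothendieck (restrict w F) ⥤ J where
  obj x := x.base
  map f := f.base
  map_id x := (Grothendieck.forget (restrict w F)).map_id x
  map_comp f g := (Grothendieck.forget (restrict w F)).map_comp f g

abbrev grothendieckMap {F G : J ⥤ Cat.{0,0}} (α : F ⟶ G) : Grothendieck F ⥤ Grothendieck G where
  obj X := ⟨X.base, (α.app X.base).toFunctor.obj X.fiber⟩
  map {X Y} f := ⟨f.base, (eqToHom (α.naturality f.base).symm).toNatTrans.app X.fiber ≫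
      (α.app Y.base).toFunctor.map f.fiber⟩
  map_id X := (Grothendieck.map α).map_id X
  map_comp f g := (Grothendieck.map α).map_comp f g

abbrev commaMap {A A' : Type} [Category.{0} A] [Category.{0} A'] (H : A ⥤ A') (v : A ⥤ I)
    (v' : A' ⥤ I) (hc : H ⋙ v' = v) (i : I) :
    CostructuredArrow v i ⥤ CostructuredArrow v' i where
  obj f := CostructuredArrow.mk (Y := H.obj f.left)
    (eqToHom (show v'.obj (H.obj f.left) = v.obj f.left from Functor.congr_obj hc f.left) ≫ f.hom)
  map {f f'} φ := CostructuredArrow.homMk (H.map φ.left) (by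
    have hH : v'.map (H.map φ.left) = eqToHom (Functor.congr_obj hc f.left) ≫ v.map φ.left ≫
        eqToHom (Functor.congr_obj hc f'.left).symm := Functor.congr_hom hc φ.left
    dsimp
    rw [hH]
    simp only [Category.assoc, eqToHom_trans_assoc, eqToHom_refl, Category.id_comp]
    rw [CostructuredArrow.w φ])
  map_id f := by apply CostructuredArrow.ext; simp
  map_comp φ ψ := by apply CostructuredArrow.ext; simp

section Unit

variable {A A' : Type} [Category.{0} A] [Category.{0} A']

abbrev unitFunctor (v : A ⥤ J) :
    A ⥤ Grothendieck (restrict w (commaFunctor (v ⋙ w.toFunctor))) where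
  obj a := ⟨v.obj a, CostructuredArrow.mk (Y := a) (𝟙 _)⟩
  map {a a'} φ := ⟨v.map φ, CostructuredArrow.homMk φ (by simp)⟩
  map_id a := by
    refine Grothendieck.ext _ _ (by simp) ?_
    apply CostructuredArrow.ext
    simp only [Functor.comp_obj, Grothendieck.id_base, CostructuredArrow.map_mk,
      CostructuredArrow.mk_left, CostructuredArrow.comp_left, CostructuredArrow.homMk_left,
      Category.comp_id, Grothendieck.id_fiber]
    erw [Comma.eqToHom_left, Comma.eqToHom_left]
  map_comp φ ψ := by
    refine Grothendieck.ext _ _ (by simp) ?_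
    apply CostructuredArrow.ext
    simp only [Functor.comp_obj, CostructuredArrow.map_mk, Grothendieck.comp_base,
      CostructuredArrow.mk_left, CostructuredArrow.comp_left, CostructuredArrow.homMk_left,
      Grothendieck.comp_fiber, CostructuredArrow.map_map_left]
    erw [Comma.eqToHom_left, Comma.eqToHom_left]

abbrev restrictCommaMap (H : A ⥤ A') (v : A ⥤ J) (v' : A' ⥤ J)
    (hc : H ⋙ v' ⋙ w.toFunctor = v ⋙ w.toFunctor) :
    restrict w (commaFunctor (v ⋙ w.toFunctor)) ⟶
      restrict w (commaFunctor (v' ⋙ w.toFunctor)) where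
  app j := ⟨commaMap H (v ⋙ w.toFunctor) (v' ⋙ w.toFunctor) hc (w.toFunctor.obj j)⟩
  naturality _ _ k := by
    apply Cat.Hom.ext
    exact CategoryTheory.Functor.ext
      (fun f => by
        simp only [CostructuredArrow.map, Comma.mapRight, Functor.comp_obj,
          Functor.const_obj_obj, Functor.const_map_app, CostructuredArrow.right_eq_id,
          Cat.Hom.comp_toFunctor, CostructuredArrow.mk_left, CostructuredArrow.mk_right,
          CostructuredArrow.mk_hom_eq_self, Category.assoc]
        rfl)
      (fun f g ψ => by
        apply CostructuredArrow.ext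
        simp [CostructuredArrow.map, Comma.mapRight])

theorem unitFunctor_naturality (H : A ⥤ A') (v : A ⥤ J) (v' : A' ⥤ J) (hv : H ⋙ v' = v) :
    H ⋙ unitFunctor w v' =
      unitFunctor w v ⋙ grothendieckMap (restrictCommaMap w H v v' (by subst hv; rfl)) := by
  subst hv
  refine CategoryTheory.Functor.ext (fun a => congrArg (Grothendieck.mk _) (by simp))
    (fun a a' φ => ?_)
  refine Grothendieck.ext _ _ (by
    rw [Grothendieck.comp_base, Grothendieck.comp_base, Grothendieck.base_eqToHom,
      Grothendieck.base_eqToHom]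
    simp) ?_
  apply CostructuredArrow.ext
  simp only [Grothendieck.fiber_eqToHom, CostructuredArrow.eqToHom_left, Grothendieck.comp_fiber,
    CostructuredArrow.comp_left]
  simp only [Functor.comp_obj, CostructuredArrow.mk_left, eqToHom_refl,
    CostructuredArrow.mk_hom_eq_self, Functor.comp_map, CostructuredArrow.map_mk,
    Cat.Hom.comp_toFunctor, Grothendieck.comp_base, CostructuredArrow.homMk_left,
    Category.id_comp, CostructuredArrow.map_map_left, Cat.Hom₂.eqToHom_toNatTrans, eqToHom_app,
    Functor.map_comp, CostructuredArrow.comp_left, Category.comp_id]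
  erw [Comma.eqToHom_left, Comma.eqToHom_left]
  simp

end Unit

section Counit

variable (F : I ⥤ Cat.{0,0})

abbrev counitFunctor (i : I) :
    CostructuredArrow (grothendieckForget w F ⋙ w.toFunctor) i ⥤ F.obj i where
  obj f := (F.map f.hom).toFunctor.obj f.left.fiber
  map {f f'} φ := mapCompHom F (w.toFunctor.map φ.left.base) f'.hom f.hom (CostructuredArrow.w φ)
      f.left.fiber ≫ (F.map f'.hom).toFunctor.map φ.left.fiber
  map_id _ := mapCompHom_id F _ (by simp) _ _ _ (by simp)
  map_comp _ _ := mapCompHom_comp F _ _ _ (by simp) _ _ _ _ _ _ _ _ _ _ _ _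

theorem map_comp_counitFunctor {i i' : I} (k : i ⟶ i') :
    CostructuredArrow.map k ⋙ counitFunctor w F i' =
      counitFunctor w F i ⋙ (F.map k).toFunctor := by
  refine CategoryTheory.Functor.ext (fun f => ?_) (fun f f' φ => ?_)
  · show (F.map (f.hom ≫ k)).toFunctor.obj f.left.fiber
      = (F.map k).toFunctor.obj ((F.map f.hom).toFunctor.obj f.left.fiber)
    rw [Functor.map_comp]
    rfl
  · exact mapCompHom_naturality F _ _ _ _ _ _ _ _ _ _ _

def counit :
    (Over.map w ⋙ overToFunctor I).obj
      (((Functor.whiskeringLeft J I Cat.{0,0}).obj w.toFunctor ⋙ Grothendieck.functor).obj F)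
        ⟶ F where
  app i := catHom (counitFunctor w F i)
  naturality _ _ k := Cat.Hom.ext (map_comp_counitFunctor w F k)

abbrev restrictCounit :
    restrict w (commaFunctor (grothendieckForget w F ⋙ w.toFunctor)) ⟶ restrict w F where
  app j := ⟨counitFunctor w F (w.toFunctor.obj j)⟩
  naturality _ _ k := Cat.Hom.ext (map_comp_counitFunctor w F (w.toFunctor.map k))

theorem commaMap_comp_counitFunctor {F' : I ⥤ Cat.{0,0}} (ν : F ⟶ F') (i : I) :
    commaMap (grothendieckMap (restrictMap w ν)) (grothendieckForget w F ⋙ w.toFunctor)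
        (grothendieckForget w F' ⋙ w.toFunctor) rfl i ⋙ counitFunctor w F' i
      = counitFunctor w F i ⋙ (ν.app i).toFunctor := by
  refine CategoryTheory.Functor.ext (fun f => ?_) (fun f f' φ => ?_)
  · simp only [Functor.comp_obj, eqToHom_refl, CostructuredArrow.mk_left,
      CostructuredArrow.mk_hom_eq_self, Category.id_comp]
    exact (Functor.congr_obj (congrArg Cat.Hom.toFunctor (ν.naturality f.hom)) f.left.fiber).symm
  have hν := Functor.congr_hom (congrArg Cat.Hom.toFunctor (ν.naturality f'.hom)) φ.left.fiber
  dsimp at hν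
  simp only [Functor.comp_obj, eqToHom_refl, CostructuredArrow.mk_left,
    CostructuredArrow.mk_hom_eq_self, Functor.comp_map, Cat.Hom.comp_toFunctor, Functor.map_comp,
    eqToHom_map, hν, eqToHom_trans_assoc, Category.assoc]
  exact eqToHom_comp_map_comp_of_eq (F'.map (𝟙 (w.toFunctor.obj f'.left.base) ≫ f'.hom)).toFunctor
    (F'.map f'.hom).toFunctor (congrArg (fun k => (F'.map k).toFunctor) (Category.id_comp _)) _
    ((eqToHom (ν.naturality (w.toFunctor.map φ.left.base)).symm).toNatTrans.app f.left.fiber)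
    (Cat.eqToHom_app _ _ _ _)
    ((ν.app (w.toFunctor.obj f'.left.base)).toFunctor.map φ.left.fiber) _ _ _ _ _

end Counit

theorem commaMap_unitFunctor_comp_counitFunctor {A : Type} [Category.{0} A] (v : A ⥤ J) (i : I) :
    commaMap (unitFunctor w v) (v ⋙ w.toFunctor)
        (grothendieckForget w (commaFunctor (v ⋙ w.toFunctor)) ⋙ w.toFunctor) rfl i ⋙
      counitFunctor w (commaFunctor (v ⋙ w.toFunctor)) i = 𝟭 _ := by
  refine CategoryTheory.Functor.ext (fun f => ?_) (fun f f' ψ => ?_)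
  · simpa using (CostructuredArrow.eq_mk f).symm
  apply CostructuredArrow.ext
  simp only [Functor.comp_obj, eqToHom_refl, CostructuredArrow.mk_left,
    CostructuredArrow.mk_hom_eq_self, CostructuredArrow.map_mk, Functor.comp_map,
    CostructuredArrow.comp_left, CostructuredArrow.map_map_left, Functor.id_obj, Functor.id_map]
  erw [Comma.eqToHom_left, Comma.eqToHom_left, Comma.eqToHom_left]
  simp
  rfl

theorem unitFunctor_comp_grothendieckMap_restrictCounit (F : I ⥤ Cat.{0,0}) :
    unitFunctor w (grothendieckForget w F) ⋙ grothendieckMap (restrictCounit w F) =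
      𝟭 (Grothendieck (restrict w F)) := by
  refine CategoryTheory.Functor.ext (fun p => congrArg (Grothendieck.mk _) (by simp))
    (fun p p' φ => ?_)
  refine Grothendieck.ext _ _ (by simp [Grothendieck.base_eqToHom]) ?_
  simp only [Functor.comp_obj, CostructuredArrow.mk_left, CostructuredArrow.mk_hom_eq_self,
    Functor.id_obj, Functor.id_map, Grothendieck.comp_base, Functor.comp_map,
    CostructuredArrow.map_mk, Cat.Hom.comp_toFunctor, Cat.Hom₂.eqToHom_toNatTrans, eqToHom_app,
    eqToHom_trans_assoc, eqToHom_map, Grothendieck.comp_fiber, Grothendieck.fiber_eqToHom]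
  exact eqToHom_comp_map_of_eq_id F _ (by simp [Grothendieck.base_eqToHom]) _ _ _ _ _ _ _

def adjunction :
    (Over.map w ⋙ overToFunctor I) ⊣
      ((Functor.whiskeringLeft J I Cat.{0,0}).obj w.toFunctor ⋙ Grothendieck.functor) where
  unit :=
    { app := fun X => Over.homMk (unitFunctor w X.hom.toFunctor).toCatHom rfl
      naturality := fun X X' h => Over.OverMorphism.ext (Cat.Hom.ext
        (unitFunctor_naturality w h.left.toFunctor X.hom.toFunctor X'.hom.toFunctor
          (congrArg Cat.Hom.toFunctor (Over.w h)))) }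
  counit :=
    { app := counit w
      naturality := fun _ _ ν => NatTrans.ext (funext fun i =>
        Cat.Hom.ext (commaMap_comp_counitFunctor w _ ν i)) }
  left_triangle_components X := NatTrans.ext (funext fun i =>
    Cat.Hom.ext (commaMap_unitFunctor_comp_counitFunctor w X.hom.toFunctor i))
  right_triangle_components F :=
    Over.OverMorphism.ext (Cat.Hom.ext (unitFunctor_comp_grothendieckMap_restrictCounit w F))

/-- For `w : J ⥤ I`, the functor `Cat/J ⥤ (I ⥤ Cat)`, `(A, v) ↦ (i ↦ (w ∘ v)/i)`, is
left adjoint to the functor `(I ⥤ Cat) ⥤ Cat/J`, `F ↦ (∫(w ⋙ F) ⥤ J)`. -/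
theorem overToFunctor_adjunction {J I : Cat.{0,0}} (w : J ⟶ I) :
    Nonempty ((Over.map w ⋙ overToFunctor I) ⊣
      ((Functor.whiskeringLeft ↥J ↥I Cat.{0,0}).obj w.toFunctor ⋙ Grothendieck.functor)) :=
  ⟨adjunction w⟩

end Paper
end

section
/- Let I be a small category. (i) For every functor F : I ⥤ Cat and every object i of I, the inclusion F(i) ⥤ (∫F)/i, a ↦ ((i, a), 1_i), has a left adjoint ε_{F,i} : (∫F)/i ⥤ F(i) given by ((j, a), p : j ⟶ i) ↦ F(p)(a); in particular ε_{F,i} is aspheric. (ii) For every small category A and every functor v : A ⥤ I, the functor A ⥤ ∫(i ↦ v/i), a ↦ (v a, (a, 1_{v a})) (where i ↦ v/i is the functor I ⥤ Cat of comma categories v/i with objects (a, p : v a ⟶ i)), has a right adjoint given by (i, (a, p : v a ⟶ i)) ↦ a; in particular it is aspheric. -/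
/-!
Both functors are left adjoints, and a left adjoint `u` is aspheric because each comma category
`A/b` has the counit at `b` as terminal object, so it lies in `𝒜` by (As1). For (i), a morphism
from `((j, x), p)` to `((i, a), 1_i)` in `(∫F)/i` has base `p`, so it is just a morphism
`F(p)(x) ⟶ a` in `F(i)`. For (ii), a morphism `(v a, (a, 1)) ⟶ (i, (a', p))` in `∫(i ↦ v/i)` is
determined by its component `a ⟶ a'`, its base being forced to be `v(a ⟶ a') ≫ p`.
-/

open CategoryTheory Limits

namespace Paper

/-- The inclusion `F(i) ⥤ (∫F)/i`, `a ↦ ((i,a), 1_i)`. -/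
def inclFiberComma {I : Cat.{0,0}} (F : ↥I ⥤ Cat.{0,0}) (i : I) :
    ↥(F.obj i) ⥤ CostructuredArrow (Grothendieck.forget F) i where
  obj a := CostructuredArrow.mk (Y := (Grothendieck.ι F i).obj a) (𝟙 i)
  map {a a'} f := CostructuredArrow.homMk ((Grothendieck.ι F i).map f) (by
    simp [Grothendieck.forget]; exact Category.id_comp _)
  map_id a := by apply CostructuredArrow.ext; exact (Grothendieck.ι F i).map_id a
  map_comp f g := by apply CostructuredArrow.ext; exact (Grothendieck.ι F i).map_comp f g

/-- The functor `ε_{F,i} : (∫F)/i ⥤ F(i)`, `((j,a), p : j ⟶ i) ↦ F(p)(a)`. -/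
def epsFunctor {I : Cat.{0,0}} (F : ↥I ⥤ Cat.{0,0}) (i : I) :
    CostructuredArrow (Grothendieck.forget F) i ⥤ ↥(F.obj i) where
  obj X := (F.map X.hom).toFunctor.obj X.left.fiber
  map {X X'} φ :=
    eqToHom (show (F.map X.hom).toFunctor.obj X.left.fiber
        = (F.map X'.hom).toFunctor.obj ((F.map φ.left.base).toFunctor.obj X.left.fiber) from by
      rw [← CostructuredArrow.w φ, F.map_comp]; rfl) ≫
      (F.map X'.hom).toFunctor.map φ.left.fiber
  map_id X := by
    have hf : (𝟙 X : X ⟶ X).left.fiber = eqToHom (by simp) := Grothendieck.id_fiber _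
    rw [hf]
    have key : ∀ {C D : Cat.{0,0}} (G : ↑C ⥤ ↑D) {a b : ↑C} (h1 : G.obj b = G.obj a)
        (h2 : a = b), eqToHom h1 ≫ G.map (eqToHom h2) = 𝟙 (G.obj b) := by
      intro C D G a b h1 h2; subst h2; simp
    exact key _ _ _
  map_comp {X Y Z} φ ψ := by
    have hY : (F.map Y.hom).toFunctor =
        (F.map ((Grothendieck.forget F).map ψ.left)).toFunctor ⋙ (F.map Z.hom).toFunctor := by
      rw [← CostructuredArrow.w ψ, F.map_comp]; rfl
    have hf : (φ ≫ ψ).left.fiber = eqToHom (by simp) ≫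
        (F.map ψ.left.base).toFunctor.map φ.left.fiber ≫ ψ.left.fiber :=
      Grothendieck.comp_fiber _ _
    rw [hf]
    have key : ∀ {C C' D : Cat.{0,0}} (H : ↑C ⥤ ↑C') (G : ↑C' ⥤ ↑D) (K : ↑C ⥤ ↑D)
        (hK : K = H ⋙ G) {u v : ↑C} (f : u ⟶ v) {s w : ↑C'} (g : H.obj v ⟶ w) {t : ↑D}
        (e1 : t = G.obj s) (e2 : s = H.obj u) (e3 : t = K.obj u)
        (e4 : K.obj v = G.obj (H.obj v)),
        eqToHom e1 ≫ G.map (eqToHom e2 ≫ H.map f ≫ g) =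
          (eqToHom e3 ≫ K.map f) ≫ eqToHom e4 ≫ G.map g := by
      intro C C' D H G K hK u v f s w g t e1 e2 e3 e4
      subst hK; subst e2; simp
    exact key _ _ _ hY _ _ _ _ _ _

/-- The functor `A ⥤ ∫(i ↦ A/i)`, `a ↦ (v a, (a, 1_{v a}))`. -/
def etaFunctor {A I : Cat.{0,0}} (v : A ⟶ I) :
    ↥A ⥤ Grothendieck (CostructuredArrow.functor v.toFunctor) where
  obj a := ⟨v.toFunctor.obj a, CostructuredArrow.mk (𝟙 (v.toFunctor.obj a))⟩
  map {a a'} f := ⟨v.toFunctor.map f, CostructuredArrow.homMk f (by simp; exact (Category.id_comp _).symm)⟩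
  map_id a := by
    apply Grothendieck.ext _ _ (by simp)
    apply CostructuredArrow.ext
    erw [Comma.comp_left, CostructuredArrow.eqToHom_left, CostructuredArrow.eqToHom_left]
    · exact Category.comp_id _
    · simp
  map_comp f g := by
    apply Grothendieck.ext _ _ (by simp)
    apply CostructuredArrow.ext
    erw [Comma.comp_left, Comma.comp_left, CostructuredArrow.eqToHom_left,
      CostructuredArrow.eqToHom_left]
    rfl

/-- The functor `∫(i ↦ A/i) ⥤ A`, `(i, (a, p : v a ⟶ i)) ↦ a`. -/
def rhoFunctor {A I : Cat.{0,0}} (v : A ⟶ I) :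
    Grothendieck (CostructuredArrow.functor v.toFunctor) ⥤ ↥A where
  obj X := X.fiber.left
  map {X Y} φ := φ.fiber.left
  map_id X := by
    simp
    erw [CostructuredArrow.eqToHom_left]
    rfl
  map_comp φ ψ := by
    simp
    erw [Comma.comp_left, Comma.comp_left, CostructuredArrow.eqToHom_left]
    exact Category.id_comp _

lemma Aspheric.of_adjunction {𝒜 : Set Cat.{0,0}} (h𝒜 : ∀ C : Cat.{0,0}, HasTerminal C → C ∈ 𝒜)
    {A B : Cat.{0,0}} {u : A ⥤ B} {r : B ⥤ A} (adj : u ⊣ r) : Aspheric 𝒜 u := fun b =>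
  h𝒜 _ (mkTerminalOfRightAdjoint _ adj b).hasTerminal

lemma Functor.map_toFunctor_map_of_eq {C : Type*} [Category C] (F : C ⥤ Cat) {c d : C}
    {p q : c ⟶ d} (h : p = q) {x y : F.obj c} (f : x ⟶ y) :
    (F.map p).toFunctor.map f =
      eqToHom (by rw [h]) ≫ (F.map q).toFunctor.map f ≫ eqToHom (by rw [h]) := by
  subst h
  simp

lemma Functor.map_id_toFunctor_map {C : Type*} [Category C] (F : C ⥤ Cat) (c : C)
    {x y : F.obj c} (f : x ⟶ y) :
    (F.map (𝟙 c)).toFunctor.map f = eqToHom (by simp) ≫ f ≫ eqToHom (by simp) := by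
  simpa using Functor.congr_hom (congrArg Cat.Hom.toFunctor (F.map_id c)) f

lemma Grothendieck.mk_comp_ι_map {C : Type*} [Category C] {F : C ⥤ Cat} {X : Grothendieck F}
    {c : C} (p : X.base ⟶ c) {a a' : F.obj c} (g : (F.map p).toFunctor.obj X.fiber ⟶ a)
    (f : a ⟶ a') :
    (⟨p, g⟩ : X ⟶ (Grothendieck.ι F c).obj a) ≫ (Grothendieck.ι F c).map f = ⟨p, g ≫ f⟩ := by
  apply Grothendieck.ext _ _ (Category.comp_id p)
  simp only [Grothendieck.ι, Grothendieck.comp_base, Grothendieck.comp_fiber,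
    Functor.map_id_toFunctor_map, Category.assoc, eqToHom_trans_assoc, eqToHom_refl,
    Category.id_comp]
  exact (eqToHom_trans_assoc _ _ _).trans ((eqToHom_trans_assoc _ _ _).trans (Category.id_comp _))

section FiberComma

variable {I : Cat.{0,0}} (F : ↥I ⥤ Cat.{0,0}) (i : I)

lemma base_eq_hom_of_hom_inclFiberComma {X : CostructuredArrow (Grothendieck.forget F) i}
    {a : F.obj i} (φ : X ⟶ (inclFiberComma F i).obj a) : φ.left.base = X.hom :=
  (Category.comp_id _).symm.trans (CostructuredArrow.w φ)

def epsHomEquiv (X : CostructuredArrow (Grothendieck.forget F) i) (a : F.obj i) :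
    ((epsFunctor F i).obj X ⟶ a) ≃ (X ⟶ (inclFiberComma F i).obj a) where
  toFun g := CostructuredArrow.homMk ⟨X.hom, g⟩ (Category.comp_id _)
  invFun φ := eqToHom (by rw [base_eq_hom_of_hom_inclFiberComma F i φ]; rfl) ≫ φ.left.fiber
  left_inv g := Category.id_comp g
  right_inv φ := by
    apply CostructuredArrow.ext
    apply Grothendieck.ext _ _ (base_eq_hom_of_hom_inclFiberComma F i φ).symm
    exact (eqToHom_trans_assoc _ _ _).trans (Category.id_comp _)

def epsAdjunction : epsFunctor F i ⊣ inclFiberComma F i :=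
  Adjunction.mkOfHomEquiv
    { homEquiv := epsHomEquiv F i
      homEquiv_naturality_left_symm := fun {X X' a} f g => by
        -- The goal is type-correct only up to unfolding `inclFiberComma`, which blocks `simp`.
        change eqToHom _ ≫ eqToHom _ ≫ (F.map g.left.base).toFunctor.map f.left.fiber ≫
            g.left.fiber =
          (eqToHom _ ≫ (F.map X'.hom).toFunctor.map f.left.fiber) ≫ eqToHom _ ≫ g.left.fiber
        rw [Functor.map_toFunctor_map_of_eq F (base_eq_hom_of_hom_inclFiberComma F i g)]
        simp only [CostructuredArrow.comp_left, Grothendieck.comp_base, Category.assoc,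
          eqToHom_trans_assoc]
        exact (eqToHom_trans_assoc _ _ _).trans (Category.assoc _ _ _).symm
      homEquiv_naturality_right := fun {X a a'} g f =>
        CostructuredArrow.ext _ _ (Grothendieck.mk_comp_ι_map X.hom g f).symm }

end FiberComma

section CommaFamily

variable {A I : Cat.{0,0}} (v : A ⟶ I)

lemma grothendieck_costructuredArrowFunctor_hom_ext
    {P Q : Grothendieck (CostructuredArrow.functor v.toFunctor)} {φ ψ : P ⟶ Q}
    (hbase : φ.base = ψ.base) (hfiber : φ.fiber.left = ψ.fiber.left) : φ = ψ := by
  obtain ⟨b, f⟩ := φ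
  obtain ⟨b', f'⟩ := ψ
  subst hbase
  congr 1
  exact CostructuredArrow.hom_ext _ _ hfiber

def etaHomEquiv (a : A) (X : Grothendieck (CostructuredArrow.functor v.toFunctor)) :
    ((etaFunctor v).obj a ⟶ X) ≃ (a ⟶ (rhoFunctor v).obj X) where
  toFun φ := φ.fiber.left
  invFun f := ⟨v.toFunctor.map f ≫ X.fiber.hom,
    CostructuredArrow.homMk f (Category.id_comp _).symm⟩
  left_inv φ := grothendieck_costructuredArrowFunctor_hom_ext v
    ((CostructuredArrow.w φ.fiber).trans (Category.id_comp _)) rfl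
  right_inv _ := rfl

def etaAdjunction : etaFunctor v ⊣ rhoFunctor v :=
  Adjunction.mkOfHomEquiv
    { homEquiv := etaHomEquiv v
      homEquiv_naturality_left_symm := fun {_ a' X} f φ =>
        grothendieck_costructuredArrowFunctor_hom_ext v
          ((congrArg (· ≫ X.fiber.hom) (v.toFunctor.map_comp f φ)).trans (Category.assoc _ _ _))
          ((rhoFunctor v).map_comp ((etaFunctor v).map f) ((etaHomEquiv v a' X).symm φ)).symm
      homEquiv_naturality_right := fun φ ψ => (rhoFunctor v).map_comp φ ψ }

end CommaFamily

/-- (i) For `F : I ⥤ Cat` and `i : I`, the inclusion `F(i) ⥤ (∫F)/i` has the left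
adjoint `ε_{F,i} : ((j,a), p) ↦ F(p)(a)`; in particular `ε_{F,i}` is aspheric.
(ii) For `v : A ⥤ I`, the functor `A ⥤ ∫(i ↦ A/i)`, `a ↦ (v a, (a, 1_{v a}))`, has the
right adjoint `(i, (a, p)) ↦ a`; in particular it is aspheric. -/
theorem eps_eta_adjunctions (𝒜 : Set Cat.{0,0}) (h𝒜 : IsRightAsphericityStructure 𝒜)
    {I : Cat.{0,0}} :
    (∀ (F : ↥I ⥤ Cat.{0,0}) (i : I),
      Nonempty (epsFunctor F i ⊣ inclFiberComma F i) ∧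
      Aspheric 𝒜 (A := Cat.of (CostructuredArrow (Grothendieck.forget F) i)) (B := F.obj i)
        (epsFunctor F i)) ∧
    (∀ (A : Cat.{0,0}) (v : A ⟶ I),
      Nonempty (etaFunctor v ⊣ rhoFunctor v) ∧
      Aspheric 𝒜 (A := A) (B := Cat.of (Grothendieck (CostructuredArrow.functor v.toFunctor)))
        (etaFunctor v)) := by
  exact ⟨fun F i => ⟨⟨epsAdjunction F i⟩, Aspheric.of_adjunction h𝒜.1 (epsAdjunction F i)⟩,
    fun A v => ⟨⟨etaAdjunction v⟩, Aspheric.of_adjunction h𝒜.1 (etaAdjunction v)⟩⟩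

end Paper
end
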